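/- arXiv:math/0701187 — 3 statements merged into one kernel-verified Lean document; each statement's English description precedes it below -/
import Mathlib

section
/- Necessary condition of invariance without transforming time: if the functional I[q] = ∫_a^b L(t, q(t), q'(t)) dt satisfies ∫_{t_a}^{t_b} L(t, q, q') dt = ∫_{t_a}^{t_b} L(t, q + ε ξ(t,q) + o(ε), d/dt(q + ε ξ(t,q) + o(ε))) dt for every subinterval [t_a, t_b] ⊆ [a,b] and all ε, then ∂₂L(t,q,q')·ξ(t,q) + ∂₃L(t,q,q')·(d/dt ξ(t,q)) = 0 along q. -/
/-! Invariance says that `ε ↦ L(t, q + ε ξ, q' + ε ξ')` is constant, so its derivative at `0`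
vanishes; by the chain rule that derivative is `∂₂L·ξ + ∂₃L·ξ'`. -/

open Set

section PartialDerivatives

variable {𝕜 : Type*} [NontriviallyNormedField 𝕜]
  {E F G : Type*} [NormedAddCommGroup E] [NormedSpace 𝕜 E] [NormedAddCommGroup F]
  [NormedSpace 𝕜 F] [NormedAddCommGroup G] [NormedSpace 𝕜 G]

theorem fderiv_apply_eq_zero_of_forall_add_smul_eq {f : E → G} {x v : E}
    (hf : DifferentiableAt 𝕜 f x) (hconst : ∀ ε : 𝕜, f (x + ε • v) = f x) :
    fderiv 𝕜 f x v = 0 := by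
  rw [← hf.lineDeriv_eq_fderiv, lineDeriv]
  simp only [hconst, deriv_const]

theorem fderiv_comp_prodMk_left_apply {f : E × F → G} {x : E} {y : F}
    (hf : DifferentiableAt 𝕜 f (x, y)) (u : E) :
    fderiv 𝕜 (fun x' => f (x', y)) x u = fderiv 𝕜 f (x, y) (u, 0) :=
  DFunLike.congr_fun (hf.hasFDerivAt.comp x (hasFDerivAt_prodMk_left (𝕜 := 𝕜) x y)).fderiv u

theorem fderiv_comp_prodMk_right_apply {f : E × F → G} {x : E} {y : F}
    (hf : DifferentiableAt 𝕜 f (x, y)) (v : F) :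
    fderiv 𝕜 (fun y' => f (x, y')) y v = fderiv 𝕜 f (x, y) (0, v) :=
  DFunLike.congr_fun (hf.hasFDerivAt.comp y (hasFDerivAt_prodMk_right (𝕜 := 𝕜) x y)).fderiv v

variable {T : Type*} [NormedAddCommGroup T] [NormedSpace 𝕜 T]

theorem fderiv_partial_add_fderiv_partial_eq_zero_of_invariant {L : T → E → F → G}
    {t : T} {y : E} {w : F} (u : E) (v : F)
    (hL : DifferentiableAt 𝕜 (fun p : T × E × F => L p.1 p.2.1 p.2.2) (t, y, w))
    (hinv : ∀ ε : 𝕜, L t (y + ε • u) (w + ε • v) = L t y w) :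
    fderiv 𝕜 (fun y' => L t y' w) y u + fderiv 𝕜 (fun w' => L t y w') w v = 0 := by
  set Λ := fun p : T × E × F => L p.1 p.2.1 p.2.2
  have hLt : DifferentiableAt 𝕜 (fun p : E × F => Λ (t, p)) (y, w) :=
    hL.comp (y, w) ((differentiableAt_const t).prodMk differentiableAt_id)
  have hdir : fderiv 𝕜 Λ (t, y, w) (0, u, v) = 0 :=
    fderiv_apply_eq_zero_of_forall_add_smul_eq hL fun ε => by simpa using hinv ε
  have hsplit : ((0 : T), u, v) = (0, u, 0) + (0, 0, v) := by simp
  rw [fderiv_comp_prodMk_left_apply (f := fun p : E × F => Λ (t, p)) hLt,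
    fderiv_comp_prodMk_right_apply (f := fun p : E × F => Λ (t, p)) hLt,
    fderiv_comp_prodMk_right_apply hL, fderiv_comp_prodMk_right_apply hL,
    ← map_add, ← hsplit, hdir]

end PartialDerivatives

theorem necessary_condition_of_invariance_general
    {m : ℕ} (a b : ℝ)
    (L : ℝ → EuclideanSpace ℝ (Fin m) → EuclideanSpace ℝ (Fin m) → ℝ)
    (hL : ContDiff ℝ 2 (fun p : ℝ × EuclideanSpace ℝ (Fin m) × EuclideanSpace ℝ (Fin m) =>
      L p.1 p.2.1 p.2.2))
    (q : ℝ → EuclideanSpace ℝ (Fin m))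
    (X : ℝ → EuclideanSpace ℝ (Fin m))  -- X t = ξ(t, q t)
    (hinv : ∀ ε : ℝ, ∀ t ∈ Icc a b,
      L t (q t) (deriv q t)
        = L t (q t + ε • X t) (deriv q t + ε • deriv X t)) :
    ∀ t ∈ Icc a b,
      fderiv ℝ (fun y => L t y (deriv q t)) (q t) (X t)
        + fderiv ℝ (fun v => L t (q t) v) (deriv q t) (deriv X t) = 0 := fun t ht =>
  fderiv_partial_add_fderiv_partial_eq_zero_of_invariant (X t) (deriv X t)
    ((hL.differentiable (by norm_num)).differentiableAt) fun ε => (hinv ε t ht).symm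

/-- Necessary condition of invariance (no time transformation): if the Lagrangian is
pointwise invariant under `q ↦ q + ε ξ(t,q)`, then
`∂₂L(t,q,q̇)·ξ + ∂₃L(t,q,q̇)·ξ̇ = 0` along `q`. -/
theorem necessary_condition_of_invariance
    {m : ℕ} (a b : ℝ) (hab : a < b)
    (L : ℝ → EuclideanSpace ℝ (Fin m) → EuclideanSpace ℝ (Fin m) → ℝ)
    (hL : ContDiff ℝ 2 (fun p : ℝ × EuclideanSpace ℝ (Fin m) × EuclideanSpace ℝ (Fin m) =>
      L p.1 p.2.1 p.2.2))
    (q : ℝ → EuclideanSpace ℝ (Fin m)) (hq : ContDiff ℝ 1 q)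
    (X : ℝ → EuclideanSpace ℝ (Fin m)) (hX : ContDiff ℝ 1 X)  -- X t = ξ(t, q t)
    (hinv : ∀ ε : ℝ, ∀ t ∈ Icc a b,
      L t (q t) (deriv q t)
        = L t (q t + ε • X t) (deriv q t + ε • deriv X t)) :
    ∀ t ∈ Icc a b,
      fderiv ℝ (fun y => L t y (deriv q t)) (q t) (X t)
        + fderiv ℝ (fun v => L t (q t) v) (deriv q t) (deriv X t) = 0 :=
  necessary_condition_of_invariance_general a b L hL q X hinv
end

section
/- Fractional Noether theorem without time transformation: suppose q satisfies the fractional Euler-Lagrange equations ∂₂L + ₜD_b^α ∂₃L + ₐD_t^β ∂₄L = 0 and the invariance condition ∂₂L·ξ + ∂₃L·ₐD_t^α ξ + ∂₄L·ₜD_b^β ξ = 0 holds along q, where all partial derivatives of L are evaluated at (t, q, ₐD_t^α q, ₜD_b^β q). Then D_t^α(∂₃L, ξ) - D_t^β(ξ, ∂₄L) = 0 along q, where D_t^γ(f,g) = -g·ₜD_b^γ f + f·ₐD_t^γ g. -/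
open Set
open scoped RealInnerProductSpace

/-- Fractional Noether theorem without transformation of time: if `q` satisfies the
fractional Euler-Lagrange equations `∂₂L + ₜD_b^α ∂₃L + ₐD_t^β ∂₄L = 0` and the
invariance condition `∂₂L·ξ + ∂₃L·ₐD_t^α ξ + ∂₄L·ₜD_b^β ξ = 0` along `q`, then
`𝒟_t^α(∂₃L, ξ) - 𝒟_t^β(ξ, ∂₄L) = 0` along `q`, where
`𝒟_t^γ(f,g) = -g·ₜD_b^γ f + f·ₐD_t^γ g`.  The left/right Riemann-Liouville
fractional derivatives of orders `α, β` are represented by the operators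
`Dlα, Drα, Dlβ, Drβ`. -/
theorem fractional_noether_without_time_transformation
    {m : ℕ} (a b α β : ℝ) (hab : a < b)
    (hα : 0 < α ∧ α ≤ 1) (hβ : 0 < β ∧ β ≤ 1)
    (Dlα Drα Dlβ Drβ :
      (ℝ → EuclideanSpace ℝ (Fin m)) → (ℝ → EuclideanSpace ℝ (Fin m)))
    (L : ℝ → EuclideanSpace ℝ (Fin m) → EuclideanSpace ℝ (Fin m) →
      EuclideanSpace ℝ (Fin m) → ℝ)
    (hL : ContDiff ℝ 2 (fun p : ℝ × EuclideanSpace ℝ (Fin m) ×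
      EuclideanSpace ℝ (Fin m) × EuclideanSpace ℝ (Fin m) =>
      L p.1 p.2.1 p.2.2.1 p.2.2.2))
    (q X : ℝ → EuclideanSpace ℝ (Fin m))  -- X t = ξ(t, q t)
    -- fractional Euler-Lagrange equations :
    (hEL : ∀ t ∈ Icc a b,
      gradient (fun y => L t y (Dlα q t) (Drβ q t)) (q t)
        + Drα (fun s => gradient (fun v => L s (q s) v (Drβ q s)) (Dlα q s)) t
        + Dlβ (fun s => gradient (fun w => L s (q s) (Dlα q s) w) (Drβ q s)) t
        = 0)
    -- necessary condition of invariance :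
    (hinv : ∀ t ∈ Icc a b,
      ⟪gradient (fun y => L t y (Dlα q t) (Drβ q t)) (q t), X t⟫
        + ⟪gradient (fun v => L t (q t) v (Drβ q t)) (Dlα q t), Dlα X t⟫
        + ⟪gradient (fun w => L t (q t) (Dlα q t) w) (Drβ q t), Drβ X t⟫ = 0) :
    ∀ t ∈ Icc a b,
      (-⟪X t, Drα (fun s => gradient (fun v => L s (q s) v (Drβ q s)) (Dlα q s)) t⟫
        + ⟪gradient (fun v => L t (q t) v (Drβ q t)) (Dlα q t), Dlα X t⟫)
      - (-⟪gradient (fun w => L t (q t) (Dlα q t) w) (Drβ q t), Drβ X t⟫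
        + ⟪X t, Dlβ (fun s => gradient (fun w => L s (q s) (Dlα q s) w) (Drβ q s)) t⟫)
      = 0 := by
  intro t ht
  have h1 := hEL t ht
  have h2 := hinv t ht
  have h3 := congrArg (fun v => ⟪v, X t⟫) h1
  simp only [inner_add_left, inner_zero_left] at h3
  have c1 : ⟪X t, Drα (fun s => gradient (fun v => L s (q s) v (Drβ q s)) (Dlα q s)) t⟫
      = ⟪Drα (fun s => gradient (fun v => L s (q s) v (Drβ q s)) (Dlα q s)) t, X t⟫ :=
    real_inner_comm _ _
  have c2 : ⟪X t, Dlβ (fun s => gradient (fun w => L s (q s) (Dlα q s) w) (Drβ q s)) t⟫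
      = ⟪Dlβ (fun s => gradient (fun w => L s (q s) (Dlα q s) w) (Drβ q s)) t, X t⟫ :=
    real_inner_comm _ _
  linarith
end

section
/- When α = β = 1, the fractional Euler-Lagrange equations ∂₂L(t,q,q̇,-q̇) + ₜD_b^1 ∂₃L + ₐD_t^1 ∂₄L = 0 reduce to the classical Euler-Lagrange equations (d/dt)∂₃𝓛(t,q,q̇) = ∂₂𝓛(t,q,q̇) for the Lagrangian 𝓛(t,q,v) := L(t,q,v,-v). -/
/-!
With `α = β = 1` the fractional equations read `∂₂L - (d/dt) ∂₃L + (d/dt) ∂₄L = 0` along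
`s ↦ (s, q, q̇, -q̇)`. By the chain rule the velocity gradient of `𝓛` at `(s, q, v)` is
`∂₃L - ∂₄L` at `(s, q, v, -v)`. Both terms are differentiable along the trajectory because
`L` and `q` are `C²`, so `(d/dt) ∂₃𝓛 = (d/dt) ∂₃L - (d/dt) ∂₄L`, which is `∂₂L = ∂₂𝓛` by the
fractional equations.
-/

open Set InnerProductSpace ContinuousLinearMap

section GradientAlong

variable {E P : Type*} [NormedAddCommGroup E] [InnerProductSpace ℝ E] [CompleteSpace E]
  [NormedAddCommGroup P] [NormedSpace ℝ P]

/-- For a coordinate embedding `ι` of a product, the partial gradient of `F` in that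
coordinate. -/
noncomputable def gradientAlong (F : P → ℝ) (ι : E →L[ℝ] P) (p : P) : E :=
  (toDual ℝ E).symm ((fderiv ℝ F p).comp ι)

theorem gradient_comp_eq_gradientAlong {F : P → ℝ} {g : E → P} {ι : E →L[ℝ] P} {x : E}
    (hF : DifferentiableAt ℝ F (g x)) (hg : HasFDerivAt g ι x) :
    gradient (fun y => F (g y)) x = gradientAlong F ι (g x) :=
  (hF.hasFDerivAt.comp x hg).hasGradientAt.gradient

theorem gradientAlong_sub (F : P → ℝ) (ι κ : E →L[ℝ] P) (p : P) :
    gradientAlong F (ι - κ) p = gradientAlong F ι p - gradientAlong F κ p := by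
  rw [gradientAlong, gradientAlong, gradientAlong, comp_sub, map_sub]

theorem ContDiff.differentiable_gradientAlong {F : P → ℝ} (hF : ContDiff ℝ 2 F)
    (ι : E →L[ℝ] P) : Differentiable ℝ (gradientAlong F ι) := by
  have hF' : Differentiable ℝ (fderiv ℝ F) :=
    (hF.fderiv_right (m := 1) (by norm_num)).differentiable one_ne_zero
  exact (toDual ℝ E).symm.comp_differentiable_iff.mpr (by fun_prop)

end GradientAlong

section Slots

variable {T E : Type*} [NormedAddCommGroup T] [NormedSpace ℝ T]
  [NormedAddCommGroup E] [NormedSpace ℝ E]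

variable (T E) in
noncomputable def slot₃ : E →L[ℝ] T × E × E × E :=
  (0 : E →L[ℝ] T).prod ((0 : E →L[ℝ] E).prod ((ContinuousLinearMap.id ℝ E).prod 0))

variable (T E) in
noncomputable def slot₄ : E →L[ℝ] T × E × E × E :=
  (0 : E →L[ℝ] T).prod ((0 : E →L[ℝ] E).prod ((0 : E →L[ℝ] E).prod (.id ℝ E)))

theorem hasFDerivAt_slot₃ (s : T) (c w x : E) :
    HasFDerivAt (fun v : E => (s, c, v, w)) (slot₃ T E) x :=
  (hasFDerivAt_const s x).prodMk
    ((hasFDerivAt_const c x).prodMk ((hasFDerivAt_id x).prodMk (hasFDerivAt_const w x)))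

theorem hasFDerivAt_slot₄ (s : T) (c v x : E) :
    HasFDerivAt (fun w : E => (s, c, v, w)) (slot₄ T E) x :=
  (hasFDerivAt_const s x).prodMk
    ((hasFDerivAt_const c x).prodMk ((hasFDerivAt_const v x).prodMk (hasFDerivAt_id x)))

theorem hasFDerivAt_slot₃_sub_slot₄ (s : T) (c x : E) :
    HasFDerivAt (fun v : E => (s, c, v, -v)) (slot₃ T E - slot₄ T E) x :=
  ((hasFDerivAt_const s x).prodMk ((hasFDerivAt_const c x).prodMk
    ((hasFDerivAt_id x).prodMk (hasFDerivAt_id x).neg))).congr_fderiv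
    (by ext <;> simp [slot₃, slot₄])

end Slots

theorem deriv_gradient_antidiagonal {E : Type*} [NormedAddCommGroup E] [InnerProductSpace ℝ E]
    [CompleteSpace E] {F : ℝ × E × E × E → ℝ} (hF : ContDiff ℝ 2 F) {q : ℝ → E}
    (hq : ContDiff ℝ 2 q) (t : ℝ) :
    deriv (fun s => gradient (fun v => F (s, q s, v, -v)) (deriv q s)) t
      = deriv (fun s => gradient (fun v => F (s, q s, v, -deriv q s)) (deriv q s)) t
        - deriv (fun s => gradient (fun w => F (s, q s, deriv q s, w)) (-deriv q s)) t := by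
  have hF₁ : Differentiable ℝ F := hF.differentiable (by norm_num)
  set γ : ℝ → ℝ × E × E × E := fun s => (s, q s, deriv q s, -deriv q s)
  have hγ : Differentiable ℝ γ := by
    have := hq.differentiable (by norm_num)
    have := hq.differentiable_deriv_two
    fun_prop
  have hd (ι : E →L[ℝ] ℝ × E × E × E) :
      DifferentiableAt ℝ (fun s => gradientAlong F ι (γ s)) t :=
    (hF.differentiable_gradientAlong ι _).comp t (hγ t)
  have h₃ (s : ℝ) : gradient (fun v => F (s, q s, v, -deriv q s)) (deriv q s)
      = gradientAlong F (slot₃ ℝ E) (γ s) :=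
    gradient_comp_eq_gradientAlong (hF₁ _) (hasFDerivAt_slot₃ ..)
  have h₄ (s : ℝ) : gradient (fun w => F (s, q s, deriv q s, w)) (-deriv q s)
      = gradientAlong F (slot₄ ℝ E) (γ s) :=
    gradient_comp_eq_gradientAlong (hF₁ _) (hasFDerivAt_slot₄ ..)
  have h₃₄ (s : ℝ) : gradient (fun v => F (s, q s, v, -v)) (deriv q s)
      = gradientAlong F (slot₃ ℝ E) (γ s) - gradientAlong F (slot₄ ℝ E) (γ s) :=
    (gradient_comp_eq_gradientAlong (hF₁ _) (hasFDerivAt_slot₃_sub_slot₄ ..)).trans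
      (gradientAlong_sub ..)
  simp only [h₃, h₄, h₃₄]
  exact deriv_fun_sub (hd _) (hd _)

theorem fractional_EL_reduces_to_classical_general
    {m : ℕ} (a b : ℝ)
    (L : ℝ → EuclideanSpace ℝ (Fin m) → EuclideanSpace ℝ (Fin m) →
      EuclideanSpace ℝ (Fin m) → ℝ)
    (hL : ContDiff ℝ 2 (fun p : ℝ × EuclideanSpace ℝ (Fin m) ×
      EuclideanSpace ℝ (Fin m) × EuclideanSpace ℝ (Fin m) =>
      L p.1 p.2.1 p.2.2.1 p.2.2.2))
    (q : ℝ → EuclideanSpace ℝ (Fin m)) (hq : ContDiff ℝ 2 q)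
    -- fractional Euler-Lagrange equations with α = β = 1 :
    (hfEL : ∀ t ∈ Icc a b,
      gradient (fun y => L t y (deriv q t) (-(deriv q t))) (q t)
        - deriv (fun s =>
            gradient (fun v => L s (q s) v (-(deriv q s))) (deriv q s)) t
        + deriv (fun s =>
            gradient (fun w => L s (q s) (deriv q s) w) (-(deriv q s))) t
        = 0) :
    -- classical Euler-Lagrange equations for 𝓛(t,q,v) = L(t,q,v,-v) :
    ∀ t ∈ Icc a b,
      deriv (fun s => gradient (fun v => L s (q s) v (-v)) (deriv q s)) t
        = gradient (fun y => L t y (deriv q t) (-(deriv q t))) (q t) := by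
  intro t ht
  calc _ = _ - _ := deriv_gradient_antidiagonal hL hq t
    _ = _ := by linear_combination (norm := module) -hfEL t ht

/-- For `α = β = 1` (where `ₐD_t^1 f = f'` and `ₜD_b^1 f = -f'`), the fractional
Euler-Lagrange equations `∂₂L + ₜD_b^1 ∂₃L + ₐD_t^1 ∂₄L = 0` reduce to the classical
Euler-Lagrange equations `(d/dt)∂₃𝓛(t,q,q̇) = ∂₂𝓛(t,q,q̇)` for the Lagrangian
`𝓛(t,q,v) := L(t,q,v,-v)` (so that `∂₃𝓛 = ∂₃L - ∂₄L`). -/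
theorem fractional_EL_reduces_to_classical
    {m : ℕ} (a b : ℝ) (hab : a < b)
    (L : ℝ → EuclideanSpace ℝ (Fin m) → EuclideanSpace ℝ (Fin m) →
      EuclideanSpace ℝ (Fin m) → ℝ)
    (hL : ContDiff ℝ 2 (fun p : ℝ × EuclideanSpace ℝ (Fin m) ×
      EuclideanSpace ℝ (Fin m) × EuclideanSpace ℝ (Fin m) =>
      L p.1 p.2.1 p.2.2.1 p.2.2.2))
    (q : ℝ → EuclideanSpace ℝ (Fin m)) (hq : ContDiff ℝ 2 q)
    -- fractional Euler-Lagrange equations with α = β = 1 :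
    (hfEL : ∀ t ∈ Icc a b,
      gradient (fun y => L t y (deriv q t) (-(deriv q t))) (q t)
        - deriv (fun s =>
            gradient (fun v => L s (q s) v (-(deriv q s))) (deriv q s)) t
        + deriv (fun s =>
            gradient (fun w => L s (q s) (deriv q s) w) (-(deriv q s))) t
        = 0) :
    -- classical Euler-Lagrange equations for 𝓛(t,q,v) = L(t,q,v,-v) :
    ∀ t ∈ Icc a b,
      deriv (fun s => gradient (fun v => L s (q s) v (-v)) (deriv q s)) t
        = gradient (fun y => L t y (deriv q t) (-(deriv q t))) (q t) :=
  fractional_EL_reduces_to_classical_general a b L hL q hq hfEL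
end
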